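/- Let p = fmq+1 be an odd prime with primitive root α, and consider the family {C_{fi}^{fq} : 0 ≤ i ≤ q−1} of fq-th cyclotomic classes. Then this family is a regular DSS(p, m, q, ρ) where ρ = min over 0 ≤ i ≤ f−1 of Σ_{j=0}^{q−1} Σ_{a=1}^{q−1} (i+jf, af)_{fq}, the sums of cyclotomic numbers of order fq. -/

import Mathlib

/-!
Multiplying by `α⁻ᵏ` turns the pairs `(x, y) ∈ C_a × C_b` with `x - y = αᵏ` into the pairs of
`C_{a-k} × C_{b-k}` with difference `1`, which are counted by the cyclotomic number
`(b - k, a - k)`; the inversion `x ↦ x⁻¹`, with `x⁻¹ + 1 = (x + 1) / x`, gives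
`(i, j) = (-i, j - i)`. Hence the outer difference `αᵏ` occurs `(k - fj, f(i - j))` times
between `C_{fi}` and `C_{fj}`, and summing over `i ≠ j` and reindexing by `a = i - j` and
`j' = ⌊k / f⌋ - j` in `ℤ/q` gives the sum for `i₀ = k mod f`. Every nonzero `d` is a power of
`α`, so the minimum `ρ` of these sums is a lower bound for the outer-difference count.
-/

/-- Number of occurrences of `d` as an outer difference (difference of elements
from distinct member sets) in the family `Q`. -/
def outerCount {G ι : Type*} [AddCommGroup G] [DecidableEq G] [Fintype ι] [DecidableEq ι]
    (Q : ι → Finset G) (d : G) : ℕ :=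
  ∑ i : ι, ∑ j : ι, if i = j then 0 else ((Q i ×ˢ Q j).filter (fun p => p.1 - p.2 = d)).card

/-- Number of occurrences of `d` as an inner difference (difference of two distinct
elements of a single member set) in the family `Q`. -/
def innerCount {G ι : Type*} [AddCommGroup G] [DecidableEq G] [Fintype ι]
    (Q : ι → Finset G) (d : G) : ℕ :=
  ∑ i : ι, ((Q i ×ˢ Q i).filter (fun p => p.1 - p.2 = d ∧ p.1 ≠ p.2)).card

open Finset

section DiffCount

variable {R : Type*} [DecidableEq R]

def diffCount [Sub R] (A B : Finset R) (d : R) : ℕ :=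
  #((A ×ˢ B).filter fun z => z.1 - z.2 = d)

theorem diffCount_one [Ring R] (A B : Finset R) :
    diffCount A B 1 = #((B.image (· + 1)) ∩ A) := by
  refine card_nbij' Prod.fst (fun x => (x, x - 1)) ?_ ?_ ?_ ?_
  · rintro ⟨x, y⟩ hxy
    simp only [coe_filter, mem_product, Set.mem_ofPred_eq] at hxy
    simp only [coe_inter, coe_image, Set.mem_inter_iff, Set.mem_image, mem_coe]
    exact ⟨⟨y, hxy.1.2, (sub_eq_iff_eq_add'.mp hxy.2).symm⟩, hxy.1.1⟩
  · intro x hx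
    simp only [coe_inter, coe_image, Set.mem_inter_iff, Set.mem_image, mem_coe] at hx
    obtain ⟨⟨y, hy, rfl⟩, hx⟩ := hx
    simpa using ⟨hx, hy⟩
  · rintro ⟨x, y⟩ hxy
    simp only [coe_filter, mem_product, Set.mem_ofPred_eq] at hxy
    simp [← hxy.2]
  · intro x _
    rfl

theorem diffCount_image_mul [Field R] (A B : Finset R) {c : R} (hc : c ≠ 0) (d : R) :
    diffCount (A.image (c * ·)) (B.image (c * ·)) (c * d) = diffCount A B d := by
  refine card_nbij' (fun z => (c⁻¹ * z.1, c⁻¹ * z.2)) (fun z => (c * z.1, c * z.2))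
    ?_ ?_ ?_ ?_
  · rintro ⟨x, y⟩ hxy
    simp only [coe_filter, mem_product, mem_image, Set.mem_ofPred_eq] at hxy ⊢
    obtain ⟨⟨⟨x, hx, rfl⟩, ⟨y, hy, rfl⟩⟩, hxy⟩ := hxy
    rw [← mul_sub] at hxy
    exact ⟨by simpa [hc] using ⟨hx, hy⟩, by simpa [← mul_sub, hc] using mul_left_cancel₀ hc hxy⟩
  · rintro ⟨x, y⟩ hxy
    simp only [coe_filter, mem_product, mem_image, Set.mem_ofPred_eq] at hxy ⊢
    exact ⟨⟨⟨x, hxy.1.1, rfl⟩, ⟨y, hxy.1.2, rfl⟩⟩, by rw [← mul_sub, hxy.2]⟩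
  · intro z _
    simp [hc]
  · intro z _
    simp [hc]

end DiffCount

section CyclotomicClass

variable {K : Type*} [Field K] [DecidableEq K] {α : K} {e m : ℕ}

def cyclotomicClass (α : K) (e m i : ℕ) : Finset K :=
  (range m).image fun t => α ^ (i + t * e)

def cyclotomicNumber (α : K) (e m i j : ℕ) : ℕ :=
  #(((cyclotomicClass α e m i).image (· + 1)) ∩ cyclotomicClass α e m j)

theorem image_mul_cyclotomicClass (s i : ℕ) :
    (cyclotomicClass α e m i).image (α ^ s * ·) = cyclotomicClass α e m (s + i) := by
  simp only [cyclotomicClass, image_image, Function.comp_def, ← pow_add, add_assoc]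

theorem cyclotomicNumber_eq_card_filter (i j : ℕ) :
    cyclotomicNumber α e m i j =
      #((cyclotomicClass α e m i).filter (· + 1 ∈ cyclotomicClass α e m j)) := by
  rw [cyclotomicNumber, ← filter_mem_eq_inter, filter_image,
    card_image_of_injective _ (add_left_injective 1)]

theorem mem_cyclotomicClass_iff (hα : α ^ (m * e) = 1) (hm : 0 < m) {i : ℕ} {x : K} :
    x ∈ cyclotomicClass α e m i ↔ ∃ n : ℕ, α ^ n = x ∧ (n : ZMod e) = i := by
  constructor
  · simp only [cyclotomicClass, mem_image]
    rintro ⟨t, -, rfl⟩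
    exact ⟨i + t * e, rfl, by simp⟩
  · rintro ⟨n, rfl, hn⟩
    obtain ⟨r, hr⟩ := Nat.modEq_iff_dvd.mp ((ZMod.natCast_eq_natCast_iff _ _ _).mp hn.symm)
    have hrm : (0 : ℤ) ≤ r % m := Int.emod_nonneg r (by omega)
    refine mem_image.mpr ⟨(r % m).toNat, ?_, pow_eq_pow_of_modEq ?_ hα⟩
    · have := Int.emod_lt_of_pos r (by omega : (0 : ℤ) < m)
      rw [mem_range]
      omega
    · refine Nat.modEq_iff_dvd.mpr ⟨r / m, ?_⟩
      have := Int.emod_add_mul_ediv r m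
      push_cast [Int.toNat_of_nonneg hrm]
      linear_combination hr - e * this

theorem disjoint_cyclotomicClass (hα : IsOfFinOrder α) (he : e ∣ orderOf α) {i j : ℕ}
    (hij : (i : ZMod e) ≠ j) : Disjoint (cyclotomicClass α e m i) (cyclotomicClass α e m j) := by
  simp only [cyclotomicClass, disjoint_left, mem_image, not_exists, not_and]
  rintro _ ⟨t, -, rfl⟩ t' - h
  refine hij ?_
  have := ((hα.pow_eq_pow_iff_modEq.mp h).of_dvd he)
  rw [← ZMod.natCast_eq_natCast_iff] at this
  simpa using this.symm

theorem card_cyclotomicClass (hα : orderOf α = m * e) (he : 0 < e) (i : ℕ) :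
    #(cyclotomicClass α e m i) = m := by
  rcases Nat.eq_zero_or_pos m with rfl | hm
  · simp [cyclotomicClass]
  have hfin : IsOfFinOrder α := orderOf_pos_iff.mp (hα ▸ Nat.mul_pos hm he)
  refine (card_image_of_injOn fun t ht t' ht' h => ?_).trans (card_range m)
  have := Nat.ModEq.add_left_cancel' i (hα ▸ hfin.pow_eq_pow_iff_modEq.mp h)
  rw [mem_coe, mem_range] at ht ht'
  exact Nat.ModEq.eq_of_lt_of_lt (Nat.ModEq.mul_right_cancel' he.ne' this) ht ht'

section Periodic

variable (hα : α ^ (m * e) = 1) (hm : 0 < m)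
include hα hm

theorem pow_mem_cyclotomicClass {n i : ℕ} (h : (n : ZMod e) = i) :
    α ^ n ∈ cyclotomicClass α e m i :=
  (mem_cyclotomicClass_iff hα hm).mpr ⟨n, rfl, h⟩

theorem cyclotomicClass_congr {i j : ℕ} (h : (i : ZMod e) = j) :
    cyclotomicClass α e m i = cyclotomicClass α e m j := by
  ext x
  simp only [mem_cyclotomicClass_iff hα hm, h]

theorem inv_mem_cyclotomicClass {i j : ℕ} (h : (j : ZMod e) = -i) {x : K}
    (hx : x ∈ cyclotomicClass α e m i) : x⁻¹ ∈ cyclotomicClass α e m j := by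
  obtain ⟨n, rfl, hn⟩ := (mem_cyclotomicClass_iff hα hm).mp hx
  have hone : 1 ∈ cyclotomicClass α e m (n + j) :=
    pow_zero α ▸ pow_mem_cyclotomicClass hα hm (by push_cast; rw [hn, h, add_neg_cancel])
  rw [← image_mul_cyclotomicClass, mem_image] at hone
  obtain ⟨y, hy, hny⟩ := hone
  rwa [inv_eq_of_mul_eq_one_right hny]

theorem mul_mem_cyclotomicClass {i j k : ℕ} (h : (k : ZMod e) = i + j) {x y : K}
    (hx : x ∈ cyclotomicClass α e m i) (hy : y ∈ cyclotomicClass α e m j) :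
    x * y ∈ cyclotomicClass α e m k := by
  obtain ⟨a, rfl, ha⟩ := (mem_cyclotomicClass_iff hα hm).mp hx
  obtain ⟨b, rfl, hb⟩ := (mem_cyclotomicClass_iff hα hm).mp hy
  exact pow_add α a b ▸ pow_mem_cyclotomicClass hα hm (by push_cast; rw [ha, hb, h])

omit [DecidableEq K] in
theorem ne_zero_of_pow_mul_eq_one [NeZero e] : α ≠ 0 :=
  ne_zero_pow (Nat.mul_ne_zero hm.ne' (NeZero.ne e)) (hα ▸ one_ne_zero)

theorem ne_zero_of_mem_cyclotomicClass [NeZero e] {i : ℕ} {x : K}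
    (hx : x ∈ cyclotomicClass α e m i) : x ≠ 0 := by
  obtain ⟨n, rfl, -⟩ := (mem_cyclotomicClass_iff hα hm).mp hx
  exact pow_ne_zero n (ne_zero_of_pow_mul_eq_one hα hm)

theorem cyclotomicNumber_le_of_inv [NeZero e] {i j i' j' : ℕ} (hi : (i' : ZMod e) = -i)
    (hj : (j' : ZMod e) = j - i) :
    cyclotomicNumber α e m i j ≤ cyclotomicNumber α e m i' j' := by
  simp only [cyclotomicNumber_eq_card_filter]
  refine card_le_card_of_injOn (·⁻¹) ?_ inv_injective.injOn
  intro x hx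
  simp only [coe_filter, Set.mem_ofPred_eq] at hx ⊢
  have hinv := inv_mem_cyclotomicClass hα hm hi hx.1
  have hx0 := ne_zero_of_mem_cyclotomicClass hα hm hx.1
  have hshift : x⁻¹ + 1 = (x + 1) * x⁻¹ := by rw [add_mul, one_mul, mul_inv_cancel₀ hx0, add_comm]
  rw [hshift]
  exact ⟨hinv, mul_mem_cyclotomicClass hα hm (by rw [hj, hi]; ring) hx.2 hinv⟩

theorem cyclotomicNumber_eq_of_inv [NeZero e] {i j i' j' : ℕ} (hi : (i' : ZMod e) = -i)
    (hj : (j' : ZMod e) = j - i) :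
    cyclotomicNumber α e m i j = cyclotomicNumber α e m i' j' :=
  (cyclotomicNumber_le_of_inv hα hm hi hj).antisymm
    (cyclotomicNumber_le_of_inv hα hm (by rw [hi, neg_neg]) (by rw [hi, hj]; ring))

theorem diffCount_cyclotomicClass [NeZero e] {a b k a' b' : ℕ} (ha' : (a' : ZMod e) = a - b)
    (hb' : (b' : ZMod e) = k - b) :
    diffCount (cyclotomicClass α e m a) (cyclotomicClass α e m b) (α ^ k) =
      cyclotomicNumber α e m b' a' := by
  have hshift (c : ℕ) : cyclotomicClass α e m c =
      (cyclotomicClass α e m (c - k : ZMod e).val).image (α ^ k * ·) := by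
    rw [image_mul_cyclotomicClass]
    exact cyclotomicClass_congr hα hm (by simp)
  have hk : α ^ k ≠ 0 := pow_ne_zero k (ne_zero_of_pow_mul_eq_one hα hm)
  have hunit := diffCount_image_mul (cyclotomicClass α e m (a - k : ZMod e).val)
    (cyclotomicClass α e m (b - k : ZMod e).val) hk 1
  rw [mul_one] at hunit
  rw [hshift a, hshift b, hunit, diffCount_one]
  exact cyclotomicNumber_eq_of_inv hα hm (by simp [hb']) (by simp [ha'])

end Periodic

end CyclotomicClass

theorem natCast_mod_mul (x f q : ℕ) : (((x % q) * f : ℕ) : ZMod (f * q)) = (x * f : ℕ) := by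
  rw [ZMod.natCast_eq_natCast_iff', mul_comm _ f, mul_comm x f, Nat.mul_mod_mul_left,
    Nat.mul_mod_mul_left, Nat.mod_mod]

section FinSum

variable {q : ℕ}

theorem natCast_val_sub_mul (f : ℕ) (i j : Fin q) :
    ((((i - j : Fin q) : ℕ) * f : ℕ) : ZMod (f * q)) =
      ((i * f : ℕ) : ZMod (f * q)) - ((j * f : ℕ) : ZMod (f * q)) := by
  have hqf : ((q * f : ℕ) : ZMod (f * q)) = 0 := by
    rw [mul_comm, ZMod.natCast_self]
  rw [Fin.val_sub, natCast_mod_mul, add_mul, Nat.sub_mul, Nat.cast_add,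
    Nat.cast_sub (Nat.mul_le_mul_right f j.isLt.le), hqf]
  push_cast
  ring

theorem natCast_mul_val_injective {f : ℕ} (hf : 0 < f) {i j : Fin q}
    (h : ((f * i : ℕ) : ZMod (f * q)) = (f * j : ℕ)) : i = j := by
  rw [ZMod.natCast_eq_natCast_iff', Nat.mul_mod_mul_left, Nat.mul_mod_mul_left,
    Nat.mod_eq_of_lt i.isLt, Nat.mod_eq_of_lt j.isLt] at h
  exact Fin.ext (Nat.eq_of_mul_eq_mul_left hf h)

variable [NeZero q] {M : Type*} [AddCommMonoid M]

theorem sum_fin_ite_zero_eq_sum_Icc (h : ℕ → M) :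
    ∑ a : Fin q, (if a = 0 then 0 else h a) = ∑ a ∈ Icc 1 (q - 1), h a := by
  have hIcc : Icc 1 (q - 1) = (range q).filter (· ≠ 0) := by
    ext a
    simp only [mem_Icc, mem_filter, mem_range]
    have := NeZero.pos q
    omega
  rw [hIcc, sum_filter, ← Fin.sum_univ_eq_sum_range (fun a => if a ≠ 0 then h a else 0)]
  refine sum_congr rfl fun a _ => ?_
  simp only [ite_not, Fin.ext_iff, Fin.val_zero]

theorem sum_sum_ite_sub_eq_sum_Icc (s : Fin q) (G : ℕ → ℕ → M) :
    ∑ j : Fin q, ∑ i : Fin q, (if i = j then 0 else G (s - j : Fin q) (i - j : Fin q)) =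
      ∑ j ∈ range q, ∑ a ∈ Icc 1 (q - 1), G j a := by
  have hinner (j : Fin q) (x : ℕ) :
      ∑ i : Fin q, (if i = j then 0 else G x (i - j : Fin q)) = ∑ a ∈ Icc 1 (q - 1), G x a := by
    rw [← sum_fin_ite_zero_eq_sum_Icc]
    exact Fintype.sum_equiv (Equiv.subRight j) _ _ fun i => by simp [sub_eq_zero]
  simp only [hinner]
  rw [← Fin.sum_univ_eq_sum_range (fun j => ∑ a ∈ Icc 1 (q - 1), G j a)]
  exact Fintype.sum_equiv (Equiv.subLeft s) _ _ fun j => rfl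

end FinSum

theorem outerCount_eq_sum_diffCount {G ι : Type*} [AddCommGroup G] [DecidableEq G] [Fintype ι]
    [DecidableEq ι] (Q : ι → Finset G) (d : G) :
    outerCount Q d = ∑ i, ∑ j, if i = j then 0 else diffCount (Q i) (Q j) d :=
  rfl

theorem outerCount_cyclotomicClass {K : Type*} [Field K] [DecidableEq K] {α : K} {f m q : ℕ}
    [NeZero f] [NeZero q] (hα : α ^ (m * (f * q)) = 1) (hm : 0 < m) (k : ℕ) :
    outerCount (fun i : Fin q => cyclotomicClass α (f * q) m (f * i)) (α ^ k) =
      ∑ j ∈ range q, ∑ a ∈ Icc 1 (q - 1),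
        cyclotomicNumber α (f * q) m (k % f + j * f) (a * f) := by
  set s : Fin q := Fin.ofNat q (k / f)
  have hterm (i j : Fin q) :
      diffCount (cyclotomicClass α (f * q) m (f * i)) (cyclotomicClass α (f * q) m (f * j)) (α ^ k)
        = cyclotomicNumber α (f * q) m (k % f + (s - j : Fin q) * f) ((i - j : Fin q) * f) := by
    refine diffCount_cyclotomicClass hα hm (by rw [natCast_val_sub_mul]; push_cast; ring) ?_
    have hk : (k : ZMod (f * q)) = ((k % f + k / f * f : ℕ) : ZMod (f * q)) := by
      rw [Nat.mod_add_div']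
    rw [Nat.cast_add, natCast_val_sub_mul, Fin.val_ofNat, natCast_mod_mul, hk]
    push_cast
    ring
  rw [outerCount_eq_sum_diffCount, sum_comm]
  simp only [hterm]
  exact sum_sum_ite_sub_eq_sum_Icc s fun x a =>
    cyclotomicNumber α (f * q) m (k % f + x * f) (a * f)

theorem stmt_12_general (p f m q : ℕ) (hf : 0 < f) (hm : 0 < m) (hq : 0 < q)
    (hp : p = f * m * q + 1) (hprime : p.Prime)
    (α : (ZMod p)ˣ) (hα : ∀ x : (ZMod p)ˣ, x ∈ Subgroup.zpowers α) :
    -- the fq-th cyclotomic classes C_i^{fq} = {α^(i+t·fq) : 0 ≤ t < m}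
    let C : ℕ → Finset (ZMod p) := fun i =>
      (Finset.range m).image (fun t => ((α : ZMod p)) ^ (i + t * (f * q)))
    -- the cyclotomic numbers (i,j)_{fq} = |(C_i^{fq} + 1) ∩ C_j^{fq}|
    let cyc : ℕ → ℕ → ℕ := fun i j => (((C i).image (fun x => x + 1)) ∩ C j).card
    -- the sums Σ_{j=0}^{q-1} Σ_{a=1}^{q-1} (i+jf, af)_{fq}
    let g : ℕ → ℕ := fun i =>
      ∑ j ∈ Finset.range q, ∑ a ∈ Finset.Icc 1 (q - 1), cyc (i + j * f) (a * f)
    -- {C_{fi}^{fq} : 0 ≤ i ≤ q-1} is a regular DSS(p, m, q, ρ) with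
    -- ρ = min_{0 ≤ i ≤ f-1} g i
    let Q : Fin q → Finset (ZMod p) := fun i => C (f * (i : ℕ))
    (∀ i j, i ≠ j → Disjoint (Q i) (Q j)) ∧
    (∀ i, (Q i).card = m) ∧
    (∀ d : ZMod p, d ≠ 0 → sInf (g '' Set.Iio f) ≤ outerCount Q d) := by
  intro C cyc g Q
  have : Fact p.Prime := ⟨hprime⟩
  have : NeZero f := ⟨hf.ne'⟩
  have : NeZero q := ⟨hq.ne'⟩
  have horder : orderOf (α : ZMod p) = m * (f * q) := by
    rw [orderOf_units, orderOf_eq_card_of_forall_mem_zpowers hα, Nat.card_eq_fintype_card,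
      ZMod.card_units p, hp, Nat.add_sub_cancel]
    ring
  refine ⟨fun i j hij => disjoint_cyclotomicClass ?_ ?_ ?_,
    fun i => card_cyclotomicClass horder (by positivity) _, fun d hd => ?_⟩
  · exact orderOf_pos_iff.mp (horder ▸ by positivity)
  · exact horder ▸ dvd_mul_left _ _
  · exact fun h => hij (natCast_mul_val_injective hf h)
  obtain ⟨k, rfl⟩ : ∃ k : ℕ, (α : ZMod p) ^ k = d := by
    obtain ⟨k, hk⟩ := mem_powers_iff_mem_zpowers.mpr (hα (Units.mk0 d hd))
    exact ⟨k, by rw [← Units.val_pow_eq_pow_val, ← Units.val_mk0 hd]; exact congrArg Units.val hk⟩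
  calc sInf (g '' Set.Iio f) ≤ g (k % f) := Nat.sInf_le ⟨k % f, Nat.mod_lt k hf, rfl⟩
    _ = outerCount Q ((α : ZMod p) ^ k) :=
      (outerCount_cyclotomicClass (horder ▸ pow_orderOf_eq_one _) hm k).symm

theorem stmt_12 (p f m q : ℕ) (hf : 0 < f) (hm : 0 < m) (hq : 0 < q)
    (hp : p = f * m * q + 1) (hprime : p.Prime) (hodd : Odd p)
    (α : (ZMod p)ˣ) (hα : ∀ x : (ZMod p)ˣ, x ∈ Subgroup.zpowers α) :
    -- the fq-th cyclotomic classes C_i^{fq} = {α^(i+t·fq) : 0 ≤ t < m}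
    let C : ℕ → Finset (ZMod p) := fun i =>
      (Finset.range m).image (fun t => ((α : ZMod p)) ^ (i + t * (f * q)))
    -- the cyclotomic numbers (i,j)_{fq} = |(C_i^{fq} + 1) ∩ C_j^{fq}|
    let cyc : ℕ → ℕ → ℕ := fun i j => (((C i).image (fun x => x + 1)) ∩ C j).card
    -- the sums Σ_{j=0}^{q-1} Σ_{a=1}^{q-1} (i+jf, af)_{fq}
    let g : ℕ → ℕ := fun i =>
      ∑ j ∈ Finset.range q, ∑ a ∈ Finset.Icc 1 (q - 1), cyc (i + j * f) (a * f)
    -- {C_{fi}^{fq} : 0 ≤ i ≤ q-1} is a regular DSS(p, m, q, ρ) with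
    -- ρ = min_{0 ≤ i ≤ f-1} g i
    let Q : Fin q → Finset (ZMod p) := fun i => C (f * (i : ℕ))
    (∀ i j, i ≠ j → Disjoint (Q i) (Q j)) ∧
    (∀ i, (Q i).card = m) ∧
    (∀ d : ZMod p, d ≠ 0 → sInf (g '' Set.Iio f) ≤ outerCount Q d) :=
  stmt_12_general p f m q hf hm hq hp hprime α hα
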